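/- The sequence (a_k) satisfies a_k·a_{t−k−1} = 1 for all 1 ≤ k ≤ t−2, and a_k + a_{t−k} = a for all 1 ≤ k ≤ t−1. -/

import Mathlib

open Polynomial

noncomputable section

abbrev SL2 (F : Type*) [Field F] := Matrix.SpecialLinearGroup (Fin 2) F

abbrev PSL2 (F : Type*) [Field F] := SL2 F ⧸ Subgroup.center (SL2 F)

/-- image in `PSL₂(F)` of the matrix `[[1, x], [0, 1]]`. -/
def uu {F : Type*} [Field F] (x : F) : PSL2 F :=
  QuotientGroup.mk ⟨!![1, x; 0, 1], by simp [Matrix.det_fin_two_of]⟩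

/-- image in `PSL₂(F)` of the matrix `[[y, 0], [0, y⁻¹]]`. -/
def hh {F : Type*} [Field F] (y : F) (hy : y ≠ 0) : PSL2 F :=
  QuotientGroup.mk ⟨!![y, 0; 0, y⁻¹], by simp [Matrix.det_fin_two_of, mul_inv_cancel₀ hy]⟩

/-- image in `PSL₂(F)` of the matrix `[[0, 1], [-1, 0]]`. -/
def ss {F : Type*} [Field F] : PSL2 F :=
  QuotientGroup.mk ⟨!![0, 1; -1, 0], by simp [Matrix.det_fin_two_of]⟩

/-- the sequence `a_k`: `a₁ = a`, `a_{k+1} = a - a_k⁻¹` (with junk value `a₀ = 0`). -/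
def aSeq {F : Type*} [Field F] (a : F) : ℕ → F
  | 0 => 0
  | k + 1 => a - (aSeq a k)⁻¹

/-- the sequence `b_ℓ`: `b₀ = b`, `b_{ℓ+1} = a - b_ℓ⁻¹`. -/
def bSeq {F : Type*} [Field F] (a b : F) : ℕ → F
  | 0 => b
  | k + 1 => a - (bSeq a b k)⁻¹

/-- `alph a n = α_{n-1}(a)`, the (index-shifted) Dickson polynomial of the second
kind values: `α_{-1} = 0`, `α₀ = 1`, `α_{n+1} = a·α_n - α_{n-1}`. -/
def alph {F : Type*} [Field F] (a : F) : ℕ → F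
  | 0 => 0
  | 1 => 1
  | n + 2 => a * alph a (n + 1) - alph a n

/-- `bet a b n = β_{n-1}(a,b)`: `β_{-1} = 1`, `β_n = b·α_n - α_{n-1}` for `n ≥ 0`. -/
def bet {F : Type*} [Field F] (a b : F) : ℕ → F
  | 0 => 1
  | n + 1 => b * alph a (n + 1) - alph a n

/-- `gam a b n = γ_{n-1}(a,b)` where `γ_n = α_n + b·β_n`. -/
def gam {F : Type*} [Field F] (a b : F) (n : ℕ) : F := alph a n + b * bet a b n

/-! With `θ = -ω` we have `a = θ + θ⁻¹`, so `alph a n = (θⁿ - θ⁻ⁿ) / (θ - θ⁻¹)` vanishes exactly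
when the order `t` of `θ² = ω²` divides `n`. Hence `alph a k ≠ 0` for `0 < k < t`, which gives
`a_k = alph a (k + 1) / alph a k`, while `alph a t = 0`; as the recurrence is palindromic, the latter
gives `alph a (t - n) = alph a (t - 1) * alph a n`, and substituting this into the quotients yields
both identities. -/

section

variable {F K : Type*} [Field F] [Field K]

theorem alph_add_two (a : F) (n : ℕ) : alph a (n + 2) = a * alph a (n + 1) - alph a n := rfl

theorem map_alph (f : F →+* K) (a : F) (n : ℕ) : f (alph a n) = alph (f a) n := by
  induction n using Nat.twoStepInduction with
  | zero => simp [alph]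
  | one => simp [alph]
  | more n ih₀ ih₁ => simp [alph_add_two, ih₀, ih₁]

theorem alph_add_inv_mul_sub_inv {θ : K} (hθ : θ ≠ 0) (n : ℕ) :
    alph (θ + θ⁻¹) n * (θ - θ⁻¹) = θ ^ n - θ⁻¹ ^ n := by
  induction n using Nat.twoStepInduction with
  | zero => simp [alph]
  | one => simp [alph]
  | more n ih₀ ih₁ =>
    rw [alph_add_two]
    linear_combination (θ + θ⁻¹) * ih₁ - ih₀ + (θ ^ n - θ⁻¹ ^ n) * mul_inv_cancel₀ hθ

theorem alph_add_inv_eq_zero_iff {θ : K} (hθ : θ ≠ 0) (hθ₂ : θ ^ 2 ≠ 1) (n : ℕ) :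
    alph (θ + θ⁻¹) n = 0 ↔ orderOf (θ ^ 2) ∣ n := by
  have hsub : θ - θ⁻¹ ≠ 0 := by
    rw [sub_ne_zero]
    contrapose! hθ₂
    rw [sq, ← mul_inv_cancel₀ hθ, ← hθ₂]
  rw [orderOf_dvd_iff_pow_eq_one, ← mul_left_inj' hsub, zero_mul, alph_add_inv_mul_sub_inv hθ,
    sub_eq_zero, inv_pow, ← pow_mul, two_mul, pow_add, mul_eq_one_iff_eq_inv₀ (pow_ne_zero n hθ)]

theorem aSeq_eq_alph_div {a : F} {k : ℕ} (hne : ∀ j, 0 < j → j ≤ k → alph a j ≠ 0) :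
    aSeq a k = alph a (k + 1) / alph a k := by
  induction k with
  | zero => simp [aSeq, alph]
  | succ k ih =>
    rw [aSeq, ih fun j hj hjk => hne j hj (by omega), inv_div, alph_add_two]
    field_simp [hne (k + 1) (by omega) le_rfl]

theorem alph_sub_eq_mul {a : F} {t : ℕ} (hzero : alph a t = 0) {n : ℕ} (hn : n ≤ t) :
    alph a (t - n) = alph a (t - 1) * alph a n := by
  induction n using Nat.twoStepInduction with
  | zero => simp [alph, hzero]
  | one => simp [alph]
  | more n ih₀ ih₁ =>
    have hrec := alph_add_two a (t - (n + 2))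
    rw [show t - (n + 2) + 2 = t - n by omega, show t - (n + 2) + 1 = t - (n + 1) by omega,
      ih₀ (by omega), ih₁ (by omega)] at hrec
    rw [alph_add_two]
    linear_combination hrec

section FirstZero

variable {a : F} {t : ℕ} (hzero : alph a t = 0) (hne : ∀ j, 0 < j → j < t → alph a j ≠ 0)
include hzero hne

theorem aSeq_mul_aSeq_eq_one {k : ℕ} (hk₁ : 1 ≤ k) (hk : k ≤ t - 2) :
    aSeq a k * aSeq a (t - k - 1) = 1 := by
  rw [aSeq_eq_alph_div fun j hj hjk => hne j hj (by omega),
    aSeq_eq_alph_div fun j hj hjk => hne j hj (by omega), show t - k - 1 + 1 = t - k by omega,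
    Nat.sub_sub, alph_sub_eq_mul hzero (n := k) (by omega),
    alph_sub_eq_mul hzero (n := k + 1) (by omega)]
  have := hne (t - 1) (by omega) (by omega)
  have := hne k (by omega) (by omega)
  have := hne (k + 1) (by omega) (by omega)
  field_simp

theorem aSeq_add_aSeq_eq {k : ℕ} (hk₁ : 1 ≤ k) (hk : k ≤ t - 1) :
    aSeq a k + aSeq a (t - k) = a := by
  obtain ⟨m, rfl⟩ : ∃ m, k = m + 1 := ⟨k - 1, by omega⟩
  rw [aSeq_eq_alph_div fun j hj hjk => hne j hj (by omega),
    aSeq_eq_alph_div fun j hj hjk => hne j hj (by omega), show t - (m + 1) + 1 = t - m by omega,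
    alph_sub_eq_mul hzero (n := m) (by omega), alph_sub_eq_mul hzero (n := m + 1) (by omega),
    alph_add_two]
  have := hne (t - 1) (by omega) (by omega)
  have := hne (m + 1) (by omega) (by omega)
  field_simp
  ring

end FirstZero

end

theorem stmt11_general (F : Type*) [Field F] (q : ℕ) (a : F)
    (ω : AlgebraicClosure F) (hroot : aeval ω (X ^ 2 + C a * X + 1 : F[X]) = 0)
    (hord : orderOf ω = q + 1) (t : ℕ) (ht : t = (q + 1) / Nat.gcd 2 (q + 1)) :
    (∀ k : ℕ, 1 ≤ k → k ≤ t - 2 → aSeq a k * aSeq a (t - k - 1) = 1) ∧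
    (∀ k : ℕ, 1 ≤ k → k ≤ t - 1 → aSeq a k + aSeq a (t - k) = a) := by
  obtain ht₁ | ht₁ := le_or_gt t 1
  · exact ⟨fun _ _ _ => by omega, fun _ _ _ => by omega⟩
  have hω : ω ≠ 0 := by rintro rfl; simp at hroot
  have hord₂ : orderOf ((-ω) ^ 2) = t := by
    rw [neg_sq, orderOf_pow' ω two_ne_zero, hord, Nat.gcd_comm, ht]
  have ha : algebraMap F _ a = -ω + (-ω)⁻¹ := by
    simp only [map_add, map_mul, map_pow, aeval_X, aeval_C, map_one] at hroot
    field_simp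
    linear_combination hroot
  have hsq : (-ω) ^ 2 ≠ 1 := by
    rw [Ne, ← orderOf_eq_one_iff, hord₂]
    omega
  have hzero_iff (n : ℕ) : alph a n = 0 ↔ t ∣ n := by
    rw [← map_eq_zero (algebraMap F (AlgebraicClosure F)), map_alph, ha,
      alph_add_inv_eq_zero_iff (neg_ne_zero.2 hω) hsq, hord₂]
  have hne (j : ℕ) (hj : 0 < j) (hjt : j < t) : alph a j ≠ 0 :=
    mt (hzero_iff j).1 (Nat.not_dvd_of_pos_of_lt hj hjt)
  have hzero : alph a t = 0 := (hzero_iff t).2 dvd_rfl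
  exact ⟨fun _ => aSeq_mul_aSeq_eq_one hzero hne, fun _ => aSeq_add_aSeq_eq hzero hne⟩

theorem stmt11 (F : Type*) [Field F] [Fintype F] (q : ℕ) (hq : Fintype.card F = q)
    (a : F) (hirr : Irreducible (X ^ 2 + C a * X + 1 : F[X]))
    (ω : AlgebraicClosure F) (hroot : aeval ω (X ^ 2 + C a * X + 1 : F[X]) = 0)
    (hord : orderOf ω = q + 1) (t : ℕ) (ht : t = (q + 1) / Nat.gcd 2 (q + 1)) :
    (∀ k : ℕ, 1 ≤ k → k ≤ t - 2 → aSeq a k * aSeq a (t - k - 1) = 1) ∧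
    (∀ k : ℕ, 1 ≤ k → k ≤ t - 1 → aSeq a k + aSeq a (t - k) = a) :=
  stmt11_general F q a ω hroot hord t ht
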